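/- Let a ∈ (0,1) be irrational. The map (m₁,m₂) ↦ (m₁+m₂)/2 - m₁²/4 + m₁m₂/2 - m₂²/4 + Σ_{k=1}^{m₁} ⌊k/(1+a)⌋ + Σ_{k=1}^{m₂} ⌊k/(1-a)⌋, defined on pairs of nonnegative integers (m₁,m₂) with m₁+m₂ even, is a bijection onto the nonnegative integers. -/

import Mathlib

/-!
Order the pairs `m = (m₁, m₂)` with `m₁ + m₂` even by the weight `m₁ (1 - a) + m₂ (1 + a)`.
Since `a` is irrational the weight is injective, and every pair has finitely many pairs below
it, so the rank of a pair (the number of pairs of smaller weight) is a bijection onto `ℕ`.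
It remains to see that the rank is the given expression. The pairs of weight at most that of
`m` are the pairs `p ≤ m` of the rectangle, together with the pairs of smaller weight to the
right of it and above it. A pair to the right is `(m₁ + 2t - k, m₂ - k)` with
`k / 2 < t < k / (1 - a)`, so there are `⌊k / (1 - a)⌋ - ⌊k / 2⌋` of them for each `k ≤ m₂`,
and symmetrically above. The sums of the `⌊k / 2⌋` cancel against the rectangle count, up to
`(m₁ + m₂) / 2 - ((m₁ - m₂) / 2) ^ 2`.
-/

open Finset

section Rank

variable {α β : Type*} [LinearOrder β] {S : Set α} {w : α → β}

noncomputable def rankBy (S : Set α) (w : α → β) (x : α) : ℕ := {y | y ∈ S ∧ w y < w x}.ncard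

theorem rankBy_lt_rankBy (hfin : ∀ x ∈ S, {y | y ∈ S ∧ w y < w x}.Finite) {x y : α}
    (hx : x ∈ S) (hy : y ∈ S) (hxy : w x < w y) : rankBy S w x < rankBy S w y := by
  refine Set.ncard_lt_ncard ⟨fun z hz => ⟨hz.1, hz.2.trans hxy⟩, fun hsub => ?_⟩ (hfin y hy)
  exact lt_irrefl _ (hsub ⟨hx, hxy⟩).2

theorem injOn_rankBy (hinj : S.InjOn w) (hfin : ∀ x ∈ S, {y | y ∈ S ∧ w y < w x}.Finite) :
    S.InjOn (rankBy S w) := by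
  intro x hx y hy h
  rcases lt_trichotomy (w x) (w y) with hlt | heq | hgt
  · exact absurd h (rankBy_lt_rankBy hfin hx hy hlt).ne
  · exact hinj hx hy heq
  · exact absurd h (rankBy_lt_rankBy hfin hy hx hgt).ne'

theorem bijOn_rankBy (hinj : S.InjOn w) (hfin : ∀ x ∈ S, {y | y ∈ S ∧ w y < w x}.Finite)
    (hS : S.Infinite) : S.BijOn (rankBy S w) Set.univ := by
  refine ⟨fun _ _ => trivial, injOn_rankBy hinj hfin, fun n _ => ?_⟩
  obtain ⟨_, ⟨x, hx, rfl⟩, hn⟩ := ((hS.image (injOn_rankBy hinj hfin)).exists_gt n)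
  -- `rankBy` maps the `rankBy x` elements below `x` injectively into `Iio (rankBy x)`
  obtain ⟨y, hy, rfl⟩ := Set.surj_on_of_inj_on_of_ncard_le (s := {y | y ∈ S ∧ w y < w x})
    (t := Set.Iio (rankBy S w x)) (fun y _ => rankBy S w y)
    (fun y hy => rankBy_lt_rankBy hfin hy.1 hx hy.2)
    (fun y z hy hz h => injOn_rankBy hinj hfin hy.1 hz.1 h)
    (by rw [Set.ncard_Iio_nat]; rfl) (Set.finite_Iio _) n hn
  exact ⟨y, hy.1, rfl⟩

end Rank

theorem ncard_even_le (n : ℕ) : {x : ℕ | Even x ∧ x ≤ n}.ncard = n / 2 + 1 := by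
  have : {x : ℕ | Even x ∧ x ≤ n} = (2 * ·) '' Set.Iic (n / 2) := by
    ext x
    simp only [Set.mem_ofPred_eq, Set.mem_image, Set.mem_Iic, even_iff_two_dvd,
      dvd_iff_exists_eq_mul_right]
    constructor
    · rintro ⟨⟨j, rfl⟩, hj⟩; exact ⟨j, by omega, rfl⟩
    · rintro ⟨j, hj, rfl⟩; exact ⟨⟨j, rfl⟩, by omega⟩
  rw [this, Set.ncard_image_of_injective _ (mul_right_injective₀ two_ne_zero), Set.ncard_Iic_nat]

theorem ncard_odd_le (n : ℕ) : {x : ℕ | Odd x ∧ x ≤ n}.ncard = (n + 1) / 2 := by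
  have : {x : ℕ | Odd x ∧ x ≤ n} = (2 * · + 1) '' Set.Iio ((n + 1) / 2) := by
    ext x
    simp only [Set.mem_ofPred_eq, Set.mem_image, Set.mem_Iio, Odd]
    constructor
    · rintro ⟨⟨j, rfl⟩, hj⟩; exact ⟨j, by omega, rfl⟩
    · rintro ⟨j, hj, rfl⟩; exact ⟨⟨j, rfl⟩, by omega⟩
  rw [this, Set.ncard_image_of_injective _ (fun x y h => by simpa using h), Set.ncard_Iio_nat]

theorem sum_Icc_div_two (n : ℕ) : ∑ k ∈ Icc 1 n, k / 2 = n / 2 * ((n + 1) / 2) := by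
  induction n with
  | zero => rfl
  | succ n ih =>
    rw [sum_Icc_succ_top (by omega), ih, show (n + 1 + 1) / 2 = n / 2 + 1 by omega]
    ring

theorem Irrational.ceil_eq_floor_add_one {x : ℝ} (hx : Irrational x) : ⌈x⌉ = ⌊x⌋ + 1 :=
  (Int.ceil_eq_floor_add_one_iff_notMem x).mpr fun ⟨n, hn⟩ => hx.ne_int n hn.symm

theorem sum_ceil_div_sub_half {b : ℝ} (hb : Irrational b) (n : ℕ) :
    ∑ k ∈ Icc 1 n, (⌈(k : ℝ) / b⌉ - (k / 2 : ℕ) - 1) =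
      ∑ k ∈ Icc 1 n, ⌊(k : ℝ) / b⌋ - (n / 2 * ((n + 1) / 2) : ℕ) := by
  rw [← sum_Icc_div_two, Nat.cast_sum, ← sum_sub_distrib]
  refine sum_congr rfl fun k hk => ?_
  rw [(hb.natCast_div (by have := (mem_Icc.mp hk).1; omega)).ceil_eq_floor_add_one]
  ring

theorem rect_count_sub_half_sums {m₁ m₂ : ℕ} (h : Even (m₁ + m₂)) :
    (((m₁ / 2 + 1) * (m₂ / 2 + 1) + (m₁ + 1) / 2 * ((m₂ + 1) / 2) : ℕ) : ℚ) - 1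
        - (m₁ / 2 * ((m₁ + 1) / 2) : ℕ) - (m₂ / 2 * ((m₂ + 1) / 2) : ℕ) =
      (m₁ + m₂ : ℚ) / 2 - (m₁ : ℚ) ^ 2 / 4 + (m₁ : ℚ) * m₂ / 2 - (m₂ : ℚ) ^ 2 / 4 := by
  obtain ⟨s, hs⟩ := h
  obtain ⟨r, rfl | rfl⟩ := Nat.even_or_odd' m₁ <;> obtain ⟨q, rfl | rfl⟩ := Nat.even_or_odd' m₂
  · rw [show 2 * r / 2 = r by omega, show (2 * r + 1) / 2 = r by omega,
      show 2 * q / 2 = q by omega, show (2 * q + 1) / 2 = q by omega]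
    push_cast; ring
  · omega
  · omega
  · rw [show (2 * r + 1) / 2 = r by omega, show (2 * r + 1 + 1) / 2 = r + 1 by omega,
      show (2 * q + 1) / 2 = q by omega, show (2 * q + 1 + 1) / 2 = q + 1 by omega]
    push_cast; ring

def evenPairs : Set (ℕ × ℕ) := {p | Even (p.1 + p.2)}

def weight (a : ℝ) (p : ℕ × ℕ) : ℝ := p.1 * (1 - a) + p.2 * (1 + a)

theorem evenPairs_infinite : evenPairs.Infinite :=
  Set.infinite_of_injective_forall_mem (f := fun n : ℕ => (n, n))
    (fun _ _ h => (Prod.mk.inj h).1) fun n => ⟨n, rfl⟩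

section Weight

variable {a : ℝ}

theorem weight_swap (p : ℕ × ℕ) : weight (-a) p.swap = weight a p := by
  simp only [weight, Prod.fst_swap, Prod.snd_swap]; ring

theorem weight_strictMono (ha₀ : -1 < a) (ha₁ : a < 1) : StrictMono (weight a) := by
  intro p q hpq
  have h₁ : (p.1 : ℝ) ≤ q.1 := by exact_mod_cast hpq.le.1
  have h₂ : (p.2 : ℝ) ≤ q.2 := by exact_mod_cast hpq.le.2
  unfold weight
  rcases Prod.lt_iff.mp hpq with ⟨hlt, -⟩ | ⟨-, hlt⟩
  · have : (p.1 : ℝ) < q.1 := by exact_mod_cast hlt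
    nlinarith
  · have : (p.2 : ℝ) < q.2 := by exact_mod_cast hlt
    nlinarith

theorem weight_injective (hirr : Irrational a) : Function.Injective (weight a) := by
  intro p q h
  have key : ((q.1 + q.2 - (p.1 + p.2) : ℤ) : ℝ) = ((p.2 - p.1 - (q.2 - q.1) : ℤ) : ℝ) * a := by
    unfold weight at h; push_cast; linarith
  have hd : (p.2 : ℤ) - p.1 - (q.2 - q.1) = 0 := by
    by_contra hne
    exact (hirr.intCast_mul hne).ne_int _ key.symm
  rw [hd, Int.cast_zero, zero_mul] at key
  have hs : (q.1 : ℤ) + q.2 - (p.1 + p.2) = 0 := by exact_mod_cast key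
  ext <;> omega

theorem finite_setOf_weight_lt (ha₀ : -1 < a) (ha₁ : a < 1) (c : ℝ) :
    {p : ℕ × ℕ | weight a p < c}.Finite := by
  refine ((Set.finite_Iic ⌈c / (1 - a)⌉₊).prod (Set.finite_Iic ⌈c / (1 + a)⌉₊)).subset ?_
  intro p hp
  have h₁ : (0 : ℝ) ≤ p.1 * (1 - a) := by have := p.1.cast_nonneg (α := ℝ); nlinarith
  have h₂ : (0 : ℝ) ≤ p.2 * (1 + a) := by have := p.2.cast_nonneg (α := ℝ); nlinarith
  simp only [Set.mem_ofPred_eq, weight] at hp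
  constructor
  · exact Nat.cast_le.mp ((le_div_iff₀ (by linarith)).mpr (by linarith) |>.trans (Nat.le_ceil _))
  · exact Nat.cast_le.mp ((le_div_iff₀ (by linarith)).mpr (by linarith) |>.trans (Nat.le_ceil _))

theorem weight_shift {m : ℕ × ℕ} {k t : ℕ} (hk : k ≤ m.2) (hkt : k ≤ m.1 + 2 * t) :
    weight a (m.1 + 2 * t - k, m.2 - k) = weight a m + 2 * (t * (1 - a) - k) := by
  simp only [weight]; push_cast [Nat.cast_sub hk, Nat.cast_sub hkt]; ring

theorem ncard_right_weight_lt (ha₀ : -1 < a) (ha₁ : a < 1) {m : ℕ × ℕ} (hm : Even (m.1 + m.2)) :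
    ({p | Even (p.1 + p.2) ∧ m.1 < p.1 ∧ weight a p < weight a m}.ncard : ℤ) =
      ∑ k ∈ Icc 1 m.2, (⌈(k : ℝ) / (1 - a)⌉ - (k / 2 : ℕ) - 1) := by
  have h1a : 0 < 1 - a := by linarith
  set T := (Icc 1 m.2).sigma fun k => Ioo (k / 2) ⌈(k : ℝ) / (1 - a)⌉₊
  set g : (Σ _ : ℕ, ℕ) → ℕ × ℕ := fun x => (m.1 + 2 * x.2 - x.1, m.2 - x.1)
  have hT : ∀ k t, (⟨k, t⟩ : Σ _ : ℕ, ℕ) ∈ T ↔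
      1 ≤ k ∧ k ≤ m.2 ∧ k / 2 < t ∧ t * (1 - a) < k := by
    intro k t
    simp only [T, mem_sigma, mem_Icc, mem_Ioo, Nat.lt_ceil, lt_div_iff₀ h1a, and_assoc]
  have himage : {p | Even (p.1 + p.2) ∧ m.1 < p.1 ∧ weight a p < weight a m} = g '' T := by
    ext p
    constructor
    · rintro ⟨hp, hp₁, hw⟩
      have hp₂ : p.2 < m.2 := by
        by_contra! h
        exact (weight_strictMono ha₀ ha₁ (Prod.lt_iff.mpr (.inl ⟨hp₁, h⟩))).not_gt hw
      obtain ⟨t, ht⟩ : ∃ t, p.1 + (m.2 - p.2) = m.1 + 2 * t := by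
        obtain ⟨r, hr⟩ := hp; obtain ⟨s, hs⟩ := hm; exact ⟨(p.1 + m.2 - m.1 - p.2) / 2, by omega⟩
      have hgp : g ⟨m.2 - p.2, t⟩ = p := by
        show (m.1 + 2 * t - (m.2 - p.2), m.2 - (m.2 - p.2)) = p; ext <;> dsimp only <;> omega
      refine ⟨⟨m.2 - p.2, t⟩, (hT _ _).mpr ⟨by omega, by omega, by omega, ?_⟩, hgp⟩
      rw [← hgp] at hw
      dsimp only [g] at hw
      rw [weight_shift (by omega) (by omega)] at hw
      linarith
    · rintro ⟨⟨k, t⟩, hkt, rfl⟩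
      obtain ⟨hk₁, hk₂, hkt, hw⟩ := (hT k t).mp hkt
      refine ⟨?_, by simp only [g]; omega, ?_⟩
      · obtain ⟨s, hs⟩ := hm; exact ⟨m.2 + t - k + s - m.2, by simp only [g]; omega⟩
      · simp only [g]; rw [weight_shift hk₂ (by omega)]; linarith
  have hinj : Set.InjOn g T := by
    rintro ⟨k, t⟩ hkt ⟨k', t'⟩ hkt' h
    rw [mem_coe, hT] at hkt hkt'
    simp only [g, Prod.mk.injEq] at h
    obtain rfl : k = k' := by omega
    obtain rfl : t = t' := by omega
    rfl
  rw [himage, hinj.ncard_image, Set.ncard_coe_finset, card_sigma, Nat.cast_sum]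
  refine sum_congr rfl fun k hk => ?_
  have hhalf : k / 2 + 1 ≤ ⌈(k : ℝ) / (1 - a)⌉₊ := by
    rw [Nat.add_one_le_iff, Nat.lt_ceil, lt_div_iff₀ h1a]
    have : ((k / 2 : ℕ) : ℝ) * 2 ≤ k := by exact_mod_cast Nat.div_mul_le_self k 2
    have : (1 : ℝ) ≤ k := by exact_mod_cast (mem_Icc.mp hk).1
    nlinarith
  rw [Nat.card_Ioo, Nat.sub_sub, Nat.cast_sub hhalf,
    Int.natCast_ceil_eq_ceil (by positivity)]
  push_cast; ring

theorem ncard_above_weight_lt (ha₀ : -1 < a) (ha₁ : a < 1) {m : ℕ × ℕ} (hm : Even (m.1 + m.2)) :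
    ({p | Even (p.1 + p.2) ∧ m.2 < p.2 ∧ weight a p < weight a m}.ncard : ℤ) =
      ∑ k ∈ Icc 1 m.1, (⌈(k : ℝ) / (1 + a)⌉ - (k / 2 : ℕ) - 1) := by
  have hswap : {p | Even (p.1 + p.2) ∧ m.2 < p.2 ∧ weight a p < weight a m} =
      Prod.swap ''
        {p | Even (p.1 + p.2) ∧ m.swap.1 < p.1 ∧ weight (-a) p < weight (-a) m.swap} := by
    ext p
    simp only [Set.image_swap_eq_preimage_swap, Set.mem_preimage, Set.mem_ofPred_eq,
      Prod.fst_swap, Prod.snd_swap, weight_swap, add_comm p.2 p.1]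
  rw [hswap, Set.ncard_image_of_injective _ Prod.swap_injective,
    ncard_right_weight_lt (by linarith) (by linarith)
      (by rwa [Prod.fst_swap, Prod.snd_swap, add_comm])]
  simp only [Prod.snd_swap, sub_neg_eq_add]

theorem ncard_evenPairs_le (m : ℕ × ℕ) :
    {p : ℕ × ℕ | Even (p.1 + p.2) ∧ p ≤ m}.ncard =
      (m.1 / 2 + 1) * (m.2 / 2 + 1) + (m.1 + 1) / 2 * ((m.2 + 1) / 2) := by
  have : {p : ℕ × ℕ | Even (p.1 + p.2) ∧ p ≤ m} =
      {x | Even x ∧ x ≤ m.1} ×ˢ {y | Even y ∧ y ≤ m.2} ∪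
        {x | Odd x ∧ x ≤ m.1} ×ˢ {y | Odd y ∧ y ≤ m.2} := by
    ext p
    simp only [Set.mem_ofPred_eq, Set.mem_union, Set.mem_prod, Nat.even_add, Prod.le_def,
      ← Nat.not_even_iff_odd]
    tauto
  have hfin : ∀ (P : ℕ → Prop) (n : ℕ), {x | P x ∧ x ≤ n}.Finite :=
    fun P n => (Set.finite_Iic n).subset fun x hx => hx.2
  have hdisj : Disjoint ({x | Even x ∧ x ≤ m.1} ×ˢ {y | Even y ∧ y ≤ m.2})
      ({x | Odd x ∧ x ≤ m.1} ×ˢ {y | Odd y ∧ y ≤ m.2}) :=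
    Set.disjoint_left.mpr fun p hp hp' => Nat.not_odd_iff_even.mpr hp.1.1 hp'.1.1
  rw [this, Set.ncard_union_eq hdisj ((hfin _ _).prod (hfin _ _)) ((hfin _ _).prod (hfin _ _)),
    Set.ncard_prod, Set.ncard_prod, ncard_even_le, ncard_even_le, ncard_odd_le, ncard_odd_le]

theorem rankBy_weight_add_one (ha₀ : -1 < a) (ha₁ : a < 1) {m : ℕ × ℕ} (hm : Even (m.1 + m.2)) :
    rankBy evenPairs (weight a) m + 1 =
      {p : ℕ × ℕ | Even (p.1 + p.2) ∧ p ≤ m}.ncard +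
        ({p | Even (p.1 + p.2) ∧ m.1 < p.1 ∧ weight a p < weight a m}.ncard +
          {p | Even (p.1 + p.2) ∧ m.2 < p.2 ∧ weight a p < weight a m}.ncard) := by
  set below := {p | p ∈ evenPairs ∧ weight a p < weight a m}
  set rect := {p : ℕ × ℕ | Even (p.1 + p.2) ∧ p ≤ m}
  set right := {p | Even (p.1 + p.2) ∧ m.1 < p.1 ∧ weight a p < weight a m}
  set above := {p | Even (p.1 + p.2) ∧ m.2 < p.2 ∧ weight a p < weight a m}
  have hmono := weight_strictMono ha₀ ha₁
  have hsplit : insert m below = rect ∪ (right ∪ above) := by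
    ext p
    constructor
    · rintro (rfl | ⟨hp, hw⟩)
      · exact .inl ⟨hm, le_rfl⟩
      · by_cases hle : p ≤ m
        · exact .inl ⟨hp, hle⟩
        · rw [Prod.le_def, not_and_or, not_le, not_le] at hle
          exact .inr (hle.imp (fun h => ⟨hp, h, hw⟩) (fun h => ⟨hp, h, hw⟩))
    · rintro (⟨hp, hle⟩ | ⟨hp, -, hw⟩ | ⟨hp, -, hw⟩)
      · rcases hle.eq_or_lt with rfl | hlt
        · exact Set.mem_insert _ _
        · exact Set.mem_insert_of_mem _ ⟨hp, hmono hlt⟩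
      · exact Set.mem_insert_of_mem _ ⟨hp, hw⟩
      · exact Set.mem_insert_of_mem _ ⟨hp, hw⟩
  have hfin : (insert m below).Finite :=
    (finite_setOf_weight_lt ha₀ ha₁ (weight a m + 1)).subset <| by
      rintro p (rfl | ⟨-, hw⟩) <;> simp only [Set.mem_ofPred_eq] <;> linarith
  have hbelow := hfin.subset (Set.subset_insert m below)
  rw [hsplit] at hfin
  have hrect : Disjoint rect (right ∪ above) := by
    rw [Set.disjoint_left]
    rintro p ⟨-, h₁, h₂⟩ (⟨-, h, -⟩ | ⟨-, h, -⟩) <;> omega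
  have hright : Disjoint right above := by
    rw [Set.disjoint_left]
    rintro p ⟨-, h₁, hw⟩ ⟨-, h₂, -⟩
    exact (hmono (Prod.lt_iff.mpr (.inl ⟨h₁, h₂.le⟩))).not_gt hw
  rw [rankBy, ← Set.ncard_insert_of_notMem (fun h => lt_irrefl _ h.2) hbelow, hsplit,
    Set.ncard_union_eq hrect (hfin.subset Set.subset_union_left)
      (hfin.subset Set.subset_union_right),
    Set.ncard_union_eq hright (hfin.subset fun p hp => .inr (.inl hp))
      (hfin.subset fun p hp => .inr (.inr hp))]

theorem rankBy_weight_eq (ha₀ : -1 < a) (ha₁ : a < 1) (hirr : Irrational a) {m : ℕ × ℕ}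
    (hm : Even (m.1 + m.2)) :
    (rankBy evenPairs (weight a) m : ℚ) =
      (m.1 + m.2 : ℚ) / 2 - (m.1 : ℚ) ^ 2 / 4 + (m.1 : ℚ) * m.2 / 2 - (m.2 : ℚ) ^ 2 / 4
        + (∑ k ∈ Finset.Icc 1 m.1, ⌊(k : ℝ) / (1 + a)⌋ : ℤ)
        + (∑ k ∈ Finset.Icc 1 m.2, ⌊(k : ℝ) / (1 - a)⌋ : ℤ) := by
  have hZ : (rankBy evenPairs (weight a) m : ℤ) + 1 = _ :=
    congrArg (Nat.cast : ℕ → ℤ) (rankBy_weight_add_one ha₀ ha₁ hm)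
  push_cast at hZ
  rw [ncard_evenPairs_le, ncard_right_weight_lt ha₀ ha₁ hm, ncard_above_weight_lt ha₀ ha₁ hm,
    sum_ceil_div_sub_half (by simpa using hirr.natCast_sub 1),
    sum_ceil_div_sub_half (by simpa using hirr.natCast_add 1)] at hZ
  have hQ := congrArg (Int.cast : ℤ → ℚ) (eq_sub_of_add_eq hZ)
  simp only [Int.cast_add, Int.cast_sub, Int.cast_natCast, Int.cast_one] at hQ
  rw [hQ, ← rect_count_sub_half_sums hm]
  ring

end Weight

theorem stmt_7 (a : ℝ) (ha0 : 0 < a) (ha1 : a < 1) (hirr : Irrational a) :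
    Set.BijOn
      (fun p : ℕ × ℕ =>
        (p.1 + p.2 : ℚ) / 2 - (p.1 : ℚ) ^ 2 / 4 + (p.1 : ℚ) * p.2 / 2 - (p.2 : ℚ) ^ 2 / 4
          + (∑ k ∈ Finset.Icc 1 p.1, ⌊(k : ℝ) / (1 + a)⌋ : ℤ)
          + (∑ k ∈ Finset.Icc 1 p.2, ⌊(k : ℝ) / (1 - a)⌋ : ℤ))
      {p : ℕ × ℕ | Even (p.1 + p.2)}
      {q : ℚ | ∃ n : ℕ, q = n} := by
  have ha₀ : -1 < a := by linarith
  have hrank : evenPairs.BijOn (rankBy evenPairs (weight a)) Set.univ :=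
    bijOn_rankBy (weight_injective hirr).injOn
      (fun m _ => (finite_setOf_weight_lt ha₀ ha1 (weight a m)).subset fun _ hp => hp.2)
      evenPairs_infinite
  have hcast : (Set.univ : Set ℕ).BijOn (Nat.cast : ℕ → ℚ) {q : ℚ | ∃ n : ℕ, q = n} :=
    ⟨fun n _ => ⟨n, rfl⟩, Nat.cast_injective.injOn, fun _ ⟨n, hn⟩ => ⟨n, trivial, hn.symm⟩⟩
  exact (hcast.comp hrank).congr fun m hm => rankBy_weight_eq ha₀ ha1 hirr hm
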